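/- arXiv:1309.6772 — 5 statements merged into one kernel-verified Lean document; each statement's English description precedes it below -/
import Mathlib

section
/- For every integer t ≥ 1, the function x ↦ x·Q(x,t-1)/Q(x,t) is strictly increasing on (0,∞), where Q(x,y) = 1 - e^{-x}·∑_{j<y} x^j/j! is the tail probability P(Po(x) ≥ y). -/
/-- Tail probability `P(Po(x) ≥ y)` of a Poisson random variable with parameter `x`. -/
noncomputable def Q (x : ℝ) (y : ℕ) : ℝ :=
  1 - Real.exp (-x) * ∑ j ∈ Finset.range y, x ^ j / (Nat.factorial j)

/-!
Write `e^x Q(x,t) = ∑_{n ≥ t} xⁿ/n!` and `x · e^x Q(x,t-1) = ∑_{n ≥ t} n xⁿ/n!`, so the function is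
the mean of `n` under the weights `xⁿ/n!` on `n ≥ t`. For `x < y` the ratio of the weights at `y`
and at `x` is increasing in `n`, so Chebyshev's sum inequality, applied to the double series
`∑_{i,j} (j - i)(xⁱyʲ - xʲyⁱ)/(i! j!)` whose terms are all nonnegative, shows that the mean
increases strictly.
-/

open scoped Nat

/-- Chebyshev's sum inequality for series; `hcd` says that `d / c` is increasing. -/
theorem Monotone.tsum_mul_mul_tsum_lt {ι : Type*} [LinearOrder ι] {w c d : ι → ℝ}
    (hw : Monotone w) (hcd : ∀ ⦃i j⦄, i ≤ j → c j * d i ≤ c i * d j) {i j : ι}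
    (hw_ij : w i < w j) (hcd_ij : c j * d i < c i * d j)
    (hc : Summable c) (hd : Summable d)
    (hwc : Summable fun n ↦ w n * c n) (hwd : Summable fun n ↦ w n * d n) :
    (∑' n, w n * c n) * ∑' n, d n < (∑' n, w n * d n) * ∑' n, c n := by
  have hprod : ∀ {f g : ι → ℝ}, Summable f → Summable g →
      Summable (fun p : ι × ι ↦ f p.1 * g p.2) ∧
        (∑' n, f n) * ∑' n, g n = ∑' p : ι × ι, f p.1 * g p.2 := fun hf hg ↦
    ⟨summable_mul_of_summable_norm (summable_norm_iff.2 hf) (summable_norm_iff.2 hg),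
      tsum_mul_tsum_of_summable_norm (summable_norm_iff.2 hf) (summable_norm_iff.2 hg)⟩
  let g : ι × ι → ℝ := fun p ↦ (w p.2 - w p.1) * (c p.1 * d p.2 - c p.2 * d p.1)
  have hg_nonneg : ∀ p, 0 ≤ g p := by
    rintro ⟨a, b⟩
    rcases le_total a b with hab | hba
    · exact mul_nonneg (sub_nonneg.2 (hw hab)) (sub_nonneg.2 (hcd hab))
    · exact mul_nonneg_of_nonpos_of_nonpos (sub_nonpos.2 (hw hba)) (sub_nonpos.2 (hcd hba))
  have hg_eq : g = fun p ↦ c p.1 * (w p.2 * d p.2) - d p.1 * (w p.2 * c p.2)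
      - (w p.1 * c p.1) * d p.2 + (w p.1 * d p.1) * c p.2 := by
    funext p; ring
  obtain ⟨s₁, e₁⟩ := hprod hc hwd
  obtain ⟨s₂, e₂⟩ := hprod hd hwc
  obtain ⟨s₃, e₃⟩ := hprod hwc hd
  obtain ⟨s₄, e₄⟩ := hprod hwd hc
  have hg_tsum : ∑' p, g p = 2 * ((∑' n, w n * d n) * ∑' n, c n - (∑' n, w n * c n) * ∑' n, d n) := by
    rw [hg_eq, Summable.tsum_add ((s₁.sub s₂).sub s₃) s₄, Summable.tsum_sub (s₁.sub s₂) s₃,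
      Summable.tsum_sub s₁ s₂, ← e₁, ← e₂, ← e₃, ← e₄]
    ring
  have hg_summable : Summable g := by
    rw [hg_eq]; exact ((s₁.sub s₂).sub s₃).add s₄
  have hg_pos : 0 < ∑' p, g p :=
    hg_summable.tsum_pos hg_nonneg (i, j) (mul_pos (sub_pos.2 hw_ij) (sub_pos.2 hcd_ij))
  linarith

theorem pow_mul_pow_le_pow_mul_pow {x y : ℝ} (hx : 0 ≤ x) (hxy : x ≤ y) {m n : ℕ} (hmn : m ≤ n) :
    x ^ n * y ^ m ≤ x ^ m * y ^ n := by
  have hy := hx.trans hxy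
  obtain ⟨k, rfl⟩ := Nat.exists_eq_add_of_le hmn
  calc x ^ (m + k) * y ^ m = x ^ m * y ^ m * x ^ k := by ring
    _ ≤ x ^ m * y ^ m * y ^ k := by gcongr
    _ = x ^ m * y ^ (m + k) := by ring

theorem pow_mul_pow_lt_pow_mul_pow {x y : ℝ} (hx : 0 < x) (hxy : x < y) {m n : ℕ} (hmn : m < n) :
    x ^ n * y ^ m < x ^ m * y ^ n := by
  have hy := hx.trans hxy
  obtain ⟨k, rfl⟩ := Nat.exists_eq_add_of_lt hmn
  calc x ^ (m + k + 1) * y ^ m = x ^ m * y ^ m * x ^ (k + 1) := by ring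
    _ < x ^ m * y ^ m * y ^ (k + 1) := by gcongr
    _ = x ^ m * y ^ (m + k + 1) := by ring

theorem pow_div_factorial_mul_le {x y : ℝ} (hx : 0 ≤ x) (hxy : x ≤ y) {m n : ℕ} (hmn : m ≤ n) :
    x ^ n / n ! * (y ^ m / m !) ≤ x ^ m / m ! * (y ^ n / n !) := by
  rw [div_mul_div_comm, div_mul_div_comm, mul_comm (n ! : ℝ)]
  exact div_le_div_of_nonneg_right (pow_mul_pow_le_pow_mul_pow hx hxy hmn) (by positivity)

theorem pow_div_factorial_mul_lt {x y : ℝ} (hx : 0 < x) (hxy : x < y) {m n : ℕ} (hmn : m < n) :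
    x ^ n / n ! * (y ^ m / m !) < x ^ m / m ! * (y ^ n / n !) := by
  rw [div_mul_div_comm, div_mul_div_comm, mul_comm (n ! : ℝ)]
  exact div_lt_div_of_pos_right (pow_mul_pow_lt_pow_mul_pow hx hxy hmn) (by positivity)

noncomputable def expTail (x : ℝ) (t : ℕ) : ℝ :=
  ∑' n, x ^ (n + t) / (n + t)!

theorem summable_pow_add_div_factorial (x : ℝ) (t : ℕ) :
    Summable fun n ↦ x ^ (n + t) / (n + t)! :=
  (summable_nat_add_iff t).2 (Real.summable_pow_div_factorial x)

theorem expTail_pos {x : ℝ} (hx : 0 < x) (t : ℕ) : 0 < expTail x t :=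
  (summable_pow_add_div_factorial x t).tsum_pos (fun _ ↦ by positivity) 0 (by positivity)

theorem Q_eq_exp_neg_mul_expTail (x : ℝ) (t : ℕ) : Q x t = Real.exp (-x) * expTail x t := by
  have hexp : Real.exp x = ∑' n, x ^ n / n ! := by
    rw [Real.exp_eq_exp_ℝ, NormedSpace.exp_eq_tsum_div]
  have hsplit := (Real.summable_pow_div_factorial x).sum_add_tsum_nat_add t
  calc Q x t = Real.exp (-x) * (Real.exp x - ∑ j ∈ Finset.range t, x ^ j / j !) := by
        rw [Q, mul_sub, ← Real.exp_add, neg_add_cancel, Real.exp_zero]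
    _ = Real.exp (-x) * expTail x t := by rw [hexp, ← hsplit, expTail, add_sub_cancel_left]

theorem mul_pow_div_factorial (x : ℝ) (n : ℕ) :
    x * (x ^ n / n !) = ((n + 1 : ℕ) : ℝ) * (x ^ (n + 1) / (n + 1)!) := by
  rw [Nat.factorial_succ, pow_succ]
  push_cast
  field_simp

theorem hasSum_mul_expTail (x : ℝ) (t : ℕ) :
    HasSum (fun n ↦ ((n + (t + 1) : ℕ) : ℝ) * (x ^ (n + (t + 1)) / (n + (t + 1))!))
      (x * expTail x t) := by
  refine ((summable_pow_add_div_factorial x t).hasSum.mul_left x).congr_fun fun n ↦ ?_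
  rw [mul_pow_div_factorial, add_assoc]

/-- For every integer `t ≥ 1`, the function `x ↦ x·Q(x,t-1)/Q(x,t)` is strictly
increasing on `(0,∞)`. -/
theorem strictMonoOn_poisson_conditional_mean (t : ℕ) (ht : 1 ≤ t) :
    StrictMonoOn (fun x : ℝ => x * Q x (t - 1) / Q x t) (Set.Ioi 0) := by
  obtain ⟨s, rfl⟩ := Nat.exists_eq_add_of_le' ht
  have hmean : ∀ x, x * Q x s / Q x (s + 1) = x * expTail x s / expTail x (s + 1) := fun x ↦ by
    rw [Q_eq_exp_neg_mul_expTail, Q_eq_exp_neg_mul_expTail, mul_left_comm,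
      mul_div_mul_left _ _ (Real.exp_ne_zero _)]
  intro x hx y hy hxy
  simp only [Nat.add_sub_cancel, hmean]
  rw [div_lt_div_iff₀ (expTail_pos hx _) (expTail_pos hy _), ← (hasSum_mul_expTail x s).tsum_eq,
    ← (hasSum_mul_expTail y s).tsum_eq, expTail, expTail]
  exact Monotone.tsum_mul_mul_tsum_lt (i := 0) (j := 1) (fun m n hmn ↦ by gcongr)
    (fun m n hmn ↦ pow_div_factorial_mul_le hx.le hxy.le (by omega))
    (by gcongr; omega) (pow_div_factorial_mul_lt hx hxy (by omega))
    (summable_pow_add_div_factorial x _) (summable_pow_add_div_factorial y _)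
    (hasSum_mul_expTail x s).summable (hasSum_mul_expTail y s).summable
end

section
/- For every integer t ≥ 1 and x > 0, the inequality (1/(t-1)!)·∑_{s≥0} (s+1)·x^s/(t+s+1)! < (∑_{s≥0} x^s/(t+s)!)^2 holds. -/
/-!
Expand the square as a Cauchy product: the coefficient of `x ^ n` is
`∑_{i+j=n} 1/((t+i)! (t+j)!)`. Since binomial coefficients `(b+m).choose m` grow with `b`,
`(t+i)! (t+j)! ≤ (t-1)! (t+i+j+1)!`, so each of the `n+1` terms is at least
`1/((t-1)! (t+n+1)!)` and the left-hand series is dominated coefficientwise, strictly at `n = 0`.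
-/

open Finset
open scoped Nat

namespace Nat

theorem factorial_add_mul_factorial_le {b c : ℕ} (h : c ≤ b) (m : ℕ) :
    (c + m)! * b ! ≤ c ! * (b + m)! :=
  calc (c + m)! * b ! = (c + m).choose m * (c ! * m ! * b !) := by
        rw [← add_choose_mul_factorial_mul_factorial c m]; ring
    _ ≤ (b + m).choose m * (c ! * m ! * b !) :=
        Nat.mul_le_mul_right _ (choose_le_choose m (by omega))
    _ = c ! * (b + m)! := by
        rw [← add_choose_mul_factorial_mul_factorial b m]; ring

theorem factorial_succ_mul_factorial_lt {b c : ℕ} (h : c < b) :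
    (c + 1)! * b ! < c ! * (b + 1)! :=
  calc (c + 1)! * b ! = (c + 1) * (c ! * b !) := by rw [factorial_succ]; ring
    _ < (b + 1) * (c ! * b !) :=
        Nat.mul_lt_mul_of_pos_right (by omega) (by positivity)
    _ = c ! * (b + 1)! := by rw [factorial_succ]; ring

end Nat

theorem summable_norm_pow_div_factorial_add (t : ℕ) (x : ℝ) :
    Summable fun s => ‖x ^ s / ((t + s)! : ℝ)‖ := by
  refine (Real.summable_pow_div_factorial |x|).of_nonneg_of_le (fun s => norm_nonneg _)
    fun s => ?_
  rw [norm_div, norm_pow, Real.norm_eq_abs, RCLike.norm_natCast]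
  gcongr
  exact Nat.le_add_left s t

section

variable {t : ℕ}

theorem inv_factorial_pred_mul_factorial_le (ht : 1 ≤ t) (i j : ℕ) :
    (((t - 1)! * (t + i + j + 1)! : ℕ) : ℝ)⁻¹ ≤ (((t + i)! * (t + j)! : ℕ) : ℝ)⁻¹ := by
  have key := Nat.factorial_add_mul_factorial_le (show t - 1 ≤ t + j by omega) (i + 1)
  rw [show t - 1 + (i + 1) = t + i by omega, show t + j + (i + 1) = t + i + j + 1 by omega] at key
  gcongr

theorem one_div_factorial_pred_mul_le_sum_antidiagonal (ht : 1 ≤ t) {x : ℝ} (hx : 0 ≤ x) (n : ℕ) :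
    1 / ((t - 1)! : ℝ) * (((n : ℝ) + 1) * x ^ n / ((t + n + 1)! : ℝ)) ≤
      ∑ p ∈ antidiagonal n, x ^ p.1 / ((t + p.1)! : ℝ) * (x ^ p.2 / ((t + p.2)! : ℝ)) :=
  calc 1 / ((t - 1)! : ℝ) * (((n : ℝ) + 1) * x ^ n / ((t + n + 1)! : ℝ))
      = ∑ _p ∈ antidiagonal n, x ^ n * (((t - 1)! * (t + n + 1)! : ℕ) : ℝ)⁻¹ := by
        rw [sum_const, Nat.card_antidiagonal, nsmul_eq_mul]
        push_cast
        ring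
    _ ≤ ∑ p ∈ antidiagonal n, x ^ p.1 / ((t + p.1)! : ℝ) * (x ^ p.2 / ((t + p.2)! : ℝ)) := by
        refine sum_le_sum fun p hp => ?_
        obtain ⟨i, j⟩ := p
        rw [HasAntidiagonal.mem_antidiagonal] at hp
        subst hp
        dsimp only
        rw [div_mul_div_comm, ← pow_add, div_eq_mul_inv, ← add_assoc, ← Nat.cast_mul]
        exact mul_le_mul_of_nonneg_left (inv_factorial_pred_mul_factorial_le ht i j) (by positivity)

end

/-- For every integer `t ≥ 1` and `x > 0`,
`(1/(t-1)!)·∑_{s≥0} (s+1)·x^s/(t+s+1)! < (∑_{s≥0} x^s/(t+s)!)^2`. -/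
theorem power_series_inequality (t : ℕ) (ht : 1 ≤ t) (x : ℝ) (hx : 0 < x) :
    (1 / (Nat.factorial (t - 1) : ℝ)) *
        ∑' s : ℕ, ((s : ℝ) + 1) * x ^ s / (Nat.factorial (t + s + 1) : ℝ) <
      (∑' s : ℕ, x ^ s / (Nat.factorial (t + s) : ℝ)) ^ 2 := by
  have hsum := summable_norm_pow_div_factorial_add t x
  rw [sq, tsum_mul_tsum_eq_tsum_sum_antidiagonal_of_summable_norm hsum hsum, ← tsum_mul_left]
  refine Summable.tsum_lt_tsum_of_nonneg (i := 0) (fun n => by positivity)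
    (one_div_factorial_pred_mul_le_sum_antidiagonal ht hx.le)
    ?_ (summable_norm_sum_mul_antidiagonal_of_summable_norm hsum hsum).of_norm
  have key := Nat.factorial_succ_mul_factorial_lt (show t - 1 < t by omega)
  rw [Nat.sub_add_cancel ht] at key
  simp only [Nat.antidiagonal_zero, sum_singleton, pow_zero, CharP.cast_eq_zero, add_zero, zero_add,
    one_mul, one_div_mul_one_div]
  exact one_div_lt_one_div_of_lt (by positivity) (mod_cast key)
end

section
/- For integers k ≥ 3 and ℓ ≥ 2, let ξ* > 0 satisfy kℓ = ξ*·Q(ξ*,ℓ)/Q(ξ*,ℓ+1). Then ξ* < kℓ and ξ* > kℓ − 0.36. -/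
open Finset Real
open scoped Nat

theorem Q_eq_Q_succ_add (x : ℝ) (y : ℕ) : Q x y = Q x (y + 1) + exp (-x) * x ^ y / y ! := by
  simp only [Q, sum_range_succ]
  ring

theorem exp_neg_mul_sum_le_Q {x : ℝ} (hx : 0 ≤ x) (y N : ℕ) :
    exp (-x) * ∑ i ∈ range N, x ^ (y + i) / (y + i)! ≤ Q x y := by
  have h := mul_le_mul_of_nonneg_left (sum_le_exp_of_nonneg hx (y + N)) (exp_pos (-x)).le
  rw [sum_range_add, ← exp_add, neg_add_cancel, exp_zero, mul_add] at h
  rw [Q]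
  linarith

theorem Q_pos {x : ℝ} (hx : 0 < x) (y : ℕ) : 0 < Q x y := by
  refine lt_of_lt_of_le ?_ (exp_neg_mul_sum_le_Q hx.le y 1)
  rw [sum_range_one]
  positivity

/-- Partial sums of `T(x) = eˣ ℓ! Q(x, ℓ+1) / x^(ℓ+1) = ∑ᵢ xⁱ ℓ! / (ℓ+1+i)!`, which is `S / x`
for the sum `S` of the paper. -/
noncomputable def scaledTail (ℓ N : ℕ) (x : ℝ) : ℝ :=
  ∑ i ∈ range N, x ^ i * ℓ ! / (ℓ + 1 + i)!

theorem scaledTail_mono {ℓ N : ℕ} {a b : ℝ} (ha : 0 ≤ a) (hab : a ≤ b) :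
    scaledTail ℓ N a ≤ scaledTail ℓ N b :=
  sum_le_sum fun i _ => by gcongr

theorem exp_neg_mul_pow_div_mul_scaledTail_le_Q {x : ℝ} (hx : 0 ≤ x) (ℓ N : ℕ) :
    exp (-x) * x ^ (ℓ + 1) / ℓ ! * scaledTail ℓ N x ≤ Q x (ℓ + 1) := by
  refine le_of_eq_of_le ?_ (exp_neg_mul_sum_le_Q hx (ℓ + 1) N)
  rw [scaledTail, mul_sum, mul_sum]
  refine sum_congr rfl fun i _ => ?_
  field_simp
  ring

theorem Nat.factorial_add_le_factorial_mul_pow (m i : ℕ) : (m + i)! ≤ m ! * (m + i) ^ i := by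
  cases m with
  | zero => simpa using Nat.factorial_le_pow i
  | succ m =>
    rw [← Nat.factorial_mul_ascFactorial]
    gcongr
    simpa [add_right_comm] using Nat.ascFactorial_le_pow_add (m + 1) i

theorem sum_pow_div_le_scaledTail {ℓ N : ℕ} {x q : ℝ} (hq : 0 ≤ q) (hx : q * (ℓ + N) ≤ x) :
    (∑ i ∈ range N, q ^ i) / (ℓ + 1) ≤ scaledTail ℓ N x := by
  rw [sum_div]
  refine sum_le_sum fun i hi => ?_
  have hiN : ℓ + 1 + i ≤ ℓ + N := by have := mem_range.mp hi; omega
  have hfac : ((ℓ + 1 + i)! : ℝ) ≤ (ℓ + 1) * ℓ ! * (ℓ + N) ^ i := by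
    have h := Nat.factorial_add_le_factorial_mul_pow (ℓ + 1) i
    rw [Nat.factorial_succ] at h
    exact_mod_cast h.trans (Nat.mul_le_mul_left _ (Nat.pow_le_pow_left hiN i))
  have hpow : q ^ i * (ℓ + N) ^ i ≤ x ^ i := by
    rw [← mul_pow]
    exact pow_le_pow_left₀ (by positivity) hx i
  rw [div_le_div_iff₀ (by positivity) (by positivity)]
  calc q ^ i * (ℓ + 1 + i)! ≤ q ^ i * ((ℓ + 1) * ℓ ! * (ℓ + N) ^ i) := by gcongr
    _ = q ^ i * (ℓ + N) ^ i * ℓ ! * (ℓ + 1) := by ring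
    _ ≤ x ^ i * ℓ ! * (ℓ + 1) := by gcongr

theorem add_one_mul_le_sum_range_succ_pow {R : Type*} [Field R] [LinearOrder R]
    [IsStrictOrderedRing R] {q : R} (hq : -1 ≤ q) (n : ℕ) :
    (n + 1) * (1 + n * (q - 1) / 2) ≤ ∑ i ∈ range (n + 1), q ^ i := by
  induction n with
  | zero => simp
  | succ n ih =>
    rw [sum_range_succ]
    have := one_add_mul_sub_le_pow hq (n + 1)
    push_cast at this ⊢
    linarith

section Bootstrap

variable {K ξ : ℝ} {ℓ : ℕ}

theorem sub_mul_Q_succ_eq (heq : K = ξ * Q ξ ℓ / Q ξ (ℓ + 1)) (hξ : 0 < ξ) :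
    (K - ξ) * Q ξ (ℓ + 1) = exp (-ξ) * ξ ^ (ℓ + 1) / ℓ ! := by
  rw [eq_div_iff (Q_pos hξ _).ne', Q_eq_Q_succ_add ξ ℓ] at heq
  linear_combination heq

theorem sub_pos_of_eq_mul_Q_div (heq : K = ξ * Q ξ ℓ / Q ξ (ℓ + 1)) (hξ : 0 < ξ) :
    0 < K - ξ := by
  have h : 0 < (K - ξ) * Q ξ (ℓ + 1) := by
    rw [sub_mul_Q_succ_eq heq hξ]
    positivity
  exact pos_of_mul_pos_left h (Q_pos hξ _).le

theorem sub_mul_scaledTail_le_one (heq : K = ξ * Q ξ ℓ / Q ξ (ℓ + 1)) (hξ : 0 < ξ) {a : ℝ}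
    (ha : 0 ≤ a) (haξ : a ≤ ξ) (N : ℕ) : (K - ξ) * scaledTail ℓ N a ≤ 1 := by
  set E := exp (-ξ) * ξ ^ (ℓ + 1) / (ℓ ! : ℝ)
  have hE : 0 < E := by positivity
  have hD := sub_pos_of_eq_mul_Q_div heq hξ
  have h : (K - ξ) * scaledTail ℓ N ξ * E ≤ 1 * E := by
    calc (K - ξ) * scaledTail ℓ N ξ * E = (K - ξ) * (E * scaledTail ℓ N ξ) := by ring
      _ ≤ (K - ξ) * Q ξ (ℓ + 1) := by
        gcongr
        exact exp_neg_mul_pow_div_mul_scaledTail_le_Q hξ.le ℓ N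
      _ = 1 * E := by rw [sub_mul_Q_succ_eq heq hξ, one_mul]
  calc (K - ξ) * scaledTail ℓ N a ≤ (K - ξ) * scaledTail ℓ N ξ := by
        gcongr
        exact scaledTail_mono ha haξ
    _ ≤ 1 := le_of_mul_le_mul_right h hE

theorem sub_le_add_one_of_eq_mul_Q_div (heq : K = ξ * Q ξ ℓ / Q ξ (ℓ + 1)) (hξ : 0 < ξ) :
    K - ξ ≤ ℓ + 1 := by
  have h := sub_mul_scaledTail_le_one heq hξ le_rfl hξ.le 1
  simp only [scaledTail, sum_range_one, pow_zero, one_mul, add_zero, Nat.factorial_succ] at h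
  push_cast at h
  rwa [div_mul_cancel_right₀ (by positivity), mul_inv_le_iff₀ (by positivity), one_mul] at h

theorem sub_le_of_one_le_mul_scaledTail (heq : K = ξ * Q ξ ℓ / Q ξ (ℓ + 1)) (hξ : 0 < ξ)
    {L c c' : ℝ} {N : ℕ} (hL : L ≤ K) (hD : K - ξ ≤ c) (hcL : c ≤ L) (hc' : 0 ≤ c')
    (hcert : 1 ≤ c' * scaledTail ℓ N (L - c)) : K - ξ ≤ c' := by
  have h := sub_mul_scaledTail_le_one heq hξ (sub_nonneg.mpr hcL) (by linarith) N
  have hT : 0 < scaledTail ℓ N (L - c) := pos_of_mul_pos_right (by linarith) hc'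
  exact le_of_mul_le_mul_right (by linarith) hT

theorem sub_le_two_of_three_le (heq : K = ξ * Q ξ ℓ / Q ξ (ℓ + 1)) (hξ : 0 < ξ)
    (hK : 3 * ℓ ≤ K) (hℓ : 3 ≤ ℓ) : K - ξ ≤ 2 := by
  have hℓR : (3 : ℝ) ≤ ℓ := by exact_mod_cast hℓ
  have hN : ((ℓ - 1 : ℕ) : ℝ) = ℓ - 1 := by rw [Nat.cast_sub (by omega), Nat.cast_one]
  refine sub_le_of_one_le_mul_scaledTail heq hξ (N := ℓ - 1) hK
    (sub_le_add_one_of_eq_mul_Q_div heq hξ) (by linarith) zero_le_two ?_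
  have h := sum_pow_div_le_scaledTail (ℓ := ℓ) (N := ℓ - 1) (x := 3 * ℓ - (ℓ + 1)) zero_le_one
    (by rw [hN]; linarith)
  simp only [one_pow, sum_const, card_range, nsmul_eq_mul, mul_one, hN] at h
  rw [div_le_iff₀ (by positivity)] at h
  nlinarith

theorem sub_le_of_eleven_le (heq : K = ξ * Q ξ ℓ / Q ξ (ℓ + 1)) (hξ : 0 < ξ)
    (hK : 3 * ℓ ≤ K) (hℓ : 11 ≤ ℓ) : K - ξ ≤ 5 / 14 := by
  have hℓR : (11 : ℝ) ≤ ℓ := by exact_mod_cast hℓ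
  refine sub_le_of_one_le_mul_scaledTail heq hξ (N := ℓ + 1) hK
    (sub_le_two_of_three_le heq hξ hK (by omega)) (by linarith) (by norm_num) ?_
  set q : ℝ := (3 * ℓ - 2) / (2 * ℓ + 1) with hq
  have hq1 : 1 ≤ q := by rw [hq, le_div_iff₀ (by positivity)]; linarith
  have hgeom := sum_pow_div_le_scaledTail (ℓ := ℓ) (N := ℓ + 1) (x := 3 * ℓ - 2) (q := q)
    (by positivity) (le_of_eq (by rw [hq]; push_cast; field_simp; ring))
  have hbern := add_one_mul_le_sum_range_succ_pow (q := q) (by linarith) ℓ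
  have hqℓ : 18 / 5 ≤ ℓ * (q - 1) := by
    rw [hq, div_sub_one (by positivity), mul_div_assoc', le_div_iff₀ (by positivity)]
    nlinarith
  have : 14 / 5 ≤ scaledTail ℓ (ℓ + 1) (3 * ℓ - 2) := by
    refine le_trans ?_ hgeom
    rw [le_div_iff₀ (by positivity)]
    nlinarith
  linarith

theorem scaledTail_certificates (h₂ : 2 ≤ ℓ) (h₁₀ : ℓ ≤ 10) :
    1 ≤ 6 / 5 * scaledTail ℓ 12 (3 * ℓ - (ℓ + 1)) ∧
    1 ≤ 11 / 20 * scaledTail ℓ 12 (3 * ℓ - 6 / 5) ∧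
    1 ≤ 2 / 5 * scaledTail ℓ 12 (3 * ℓ - 11 / 20) ∧
    1 ≤ 5 / 14 * scaledTail ℓ 12 (3 * ℓ - 2 / 5) := by
  interval_cases ℓ <;> norm_num [scaledTail, sum_range_succ, Nat.factorial]

theorem sub_le_of_le_ten (heq : K = ξ * Q ξ ℓ / Q ξ (ℓ + 1)) (hξ : 0 < ξ)
    (hK : 3 * ℓ ≤ K) (h₂ : 2 ≤ ℓ) (h₁₀ : ℓ ≤ 10) : K - ξ ≤ 5 / 14 := by
  have hℓ : (2 : ℝ) ≤ ℓ := by exact_mod_cast h₂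
  obtain ⟨cert₁, cert₂, cert₃, cert₄⟩ := scaledTail_certificates h₂ h₁₀
  have d₀ := sub_le_add_one_of_eq_mul_Q_div heq hξ
  have d₁ := sub_le_of_one_le_mul_scaledTail heq hξ hK d₀ (by linarith) (by norm_num) cert₁
  have d₂ := sub_le_of_one_le_mul_scaledTail heq hξ hK d₁ (by linarith) (by norm_num) cert₂
  have d₃ := sub_le_of_one_le_mul_scaledTail heq hξ hK d₂ (by linarith) (by norm_num) cert₃
  exact sub_le_of_one_le_mul_scaledTail heq hξ hK d₃ (by linarith) (by norm_num) cert₄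

end Bootstrap

/-- If `kℓ = ξ*·Q(ξ*,ℓ)/Q(ξ*,ℓ+1)` with `k ≥ 3` and `ℓ ≥ 2`, then
`kℓ − 0.36 < ξ* < kℓ`. -/
theorem xi_star_bounds (k ℓ : ℕ) (hk : 3 ≤ k) (hℓ : 2 ≤ ℓ) (ξ : ℝ) (hξ : 0 < ξ)
    (heq : (k : ℝ) * ℓ = ξ * Q ξ ℓ / Q ξ (ℓ + 1)) :
    ξ < (k : ℝ) * ℓ ∧ (k : ℝ) * ℓ - 0.36 < ξ := by
  have hK : 3 * (ℓ : ℝ) ≤ k * ℓ := by gcongr; exact_mod_cast hk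
  have hgap : (k : ℝ) * ℓ - ξ ≤ 5 / 14 := by
    rcases le_or_gt ℓ 10 with h₁₀ | h₁₁
    · exact sub_le_of_le_ten heq hξ hK hℓ h₁₀
    · exact sub_le_of_eleven_le heq hξ hK h₁₁
  exact ⟨sub_pos.mp (sub_pos_of_eq_mul_Q_div heq hξ), by norm_num at hgap ⊢; linarith⟩
end

section
/- For integers k ≥ 3 and ℓ ≥ 2, let ξ* > 0 satisfy kℓ = ξ*·Q(ξ*,ℓ)/Q(ξ*,ℓ+1). Then ξ* > kℓ/2. -/
open Real Nat Finset

/-!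
Write `A = Q(ξ, ℓ+1)` and `t = e^{-ξ} ξ^ℓ/ℓ!`, so that `Q(ξ, ℓ) = A + t` and the defining equation
reads `kℓ·A = ξ·(A + t)`. Since the tail `A` exceeds its first term `t·ξ/(ℓ+1)`, we get
`kℓ·t < (ℓ+1)(A + t)`, and `kℓ ≥ 2(ℓ+1)` forces `t < A`; hence `ξ = kℓ·A/(A + t) > kℓ/2`.
-/

noncomputable def poissonTerm (x : ℝ) (n : ℕ) : ℝ :=
  exp (-x) * (x ^ n / n !)

lemma poissonTerm_pos {x : ℝ} (hx : 0 < x) (n : ℕ) : 0 < poissonTerm x n := by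
  unfold poissonTerm; positivity

lemma poissonTerm_succ (x : ℝ) (n : ℕ) :
    poissonTerm x (n + 1) = poissonTerm x n * x / (n + 1) := by
  unfold poissonTerm
  push_cast [factorial_succ, pow_succ]
  field_simp

lemma Q_eq_Q_succ_add_poissonTerm (x : ℝ) (n : ℕ) : Q x n = Q x (n + 1) + poissonTerm x n := by
  simp only [Q, poissonTerm, sum_range_succ]
  ring

lemma poissonTerm_lt_Q {x : ℝ} (hx : 0 < x) (n : ℕ) : poissonTerm x n < Q x n := by
  have hsum : ∑ j ∈ range (n + 1), x ^ j / (j ! : ℝ) < exp x := by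
    refine lt_of_lt_of_le ?_ (sum_le_exp_of_nonneg hx.le (n + 2))
    rw [sum_range_succ _ (n + 1)]
    exact lt_add_of_pos_right _ (by positivity)
  have hmass : exp (-x) * ∑ j ∈ range (n + 1), x ^ j / (j ! : ℝ) < 1 := by
    rwa [exp_neg, inv_mul_lt_one₀ (exp_pos x)]
  rw [sum_range_succ, mul_add] at hmass
  unfold Q poissonTerm
  linarith

lemma half_lt_of_mul_eq_mul_add {m L a t ξ : ℝ} (ha : 0 < a) (ht : 0 < t) (hξ : 0 < ξ)
    (htail : t * ξ < L * a) (heq : m * a = ξ * (a + t)) (hm : 2 * L ≤ m) : m / 2 < ξ := by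
  have hL : 0 < L := pos_of_mul_pos_left ((mul_pos ht hξ).trans htail) ha.le
  have hmt : m * t < L * (a + t) := by nlinarith
  have hta : t < a := by nlinarith
  nlinarith

/-- If `kℓ = ξ*·Q(ξ*,ℓ)/Q(ξ*,ℓ+1)` with `k ≥ 3` and `ℓ ≥ 2`, then `ξ* > kℓ/2`. -/
theorem xi_star_gt_half (k ℓ : ℕ) (hk : 3 ≤ k) (hℓ : 2 ≤ ℓ) (ξ : ℝ) (hξ : 0 < ξ)
    (heq : (k : ℝ) * ℓ = ξ * Q ξ ℓ / Q ξ (ℓ + 1)) :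
    (k : ℝ) * ℓ / 2 < ξ := by
  have htail : poissonTerm ξ ℓ * ξ < (ℓ + 1) * Q ξ (ℓ + 1) := by
    have hnext := poissonTerm_lt_Q hξ (ℓ + 1)
    rw [poissonTerm_succ] at hnext
    rwa [← div_lt_iff₀' (by positivity)]
  have hA : 0 < Q ξ (ℓ + 1) := (poissonTerm_pos hξ _).trans (poissonTerm_lt_Q hξ _)
  rw [Q_eq_Q_succ_add_poissonTerm, eq_div_iff hA.ne'] at heq
  have hkℓ : 2 * ((ℓ : ℝ) + 1) ≤ k * ℓ := by
    have : (3 : ℝ) ≤ k := by exact_mod_cast hk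
    have : (2 : ℝ) ≤ ℓ := by exact_mod_cast hℓ
    nlinarith
  exact half_lt_of_mul_eq_mul_add hA (poissonTerm_pos hξ ℓ) hξ htail heq hkℓ
end

section
/- Let ℓ ≥ 1 be an integer, Λ > 0, and for z > ℓ+1 let T_z be the unique solution of z = T·Q(T,ℓ)/Q(T,ℓ+1). Define I_Λ(z) = z(ln T_z − ln Λ) − T_z + Λ − ln Q(T_z, ℓ+1) + ln Q(Λ, ℓ+1). Then the derivative of I_Λ with respect to z equals ln T_z − ln Λ. -/
/-!
Let `X ~ Po(t)` and `f(t) = t Q(t,ℓ)/Q(t,ℓ+1) = E[X | X ≥ ℓ + 1]`. Writing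
`Q(t,ℓ+1) = P(X = ℓ) R(t)` with `R(t) = ∑_{k≥1} ℓ! t^k / (ℓ+k)!`, one gets
`f' = P(X = ℓ)² (R² + (ℓ+1)R - tR - t) / Q(t,ℓ+1)²`. Comparing coefficients of `t^(n+2)`, the
bracket is positive because `ℓ!/(ℓ+i+j)! < (ℓ!/(ℓ+i)!) (ℓ!/(ℓ+j)!)` for `i, j ≥ 1`. Hence `f` is
strictly increasing on `(0, ∞)`, `T` is its continuous inverse, and `T` is differentiable by the
inverse function theorem. In the chain rule for `I_Λ` the coefficient of `T'` is
`z/T - 1 - P(X = ℓ)/Q(T,ℓ+1)`, which vanishes because `z = f(T)`.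
-/

open Real Finset Set Filter

noncomputable def poissonWeight (t : ℝ) (k : ℕ) : ℝ := exp (-t) * (t ^ k / k.factorial)

lemma poissonWeight_pos {t : ℝ} (ht : 0 < t) (k : ℕ) : 0 < poissonWeight t k := by
  unfold poissonWeight
  positivity

lemma mul_poissonWeight (t : ℝ) (k : ℕ) :
    t * poissonWeight t k = (k + 1) * poissonWeight t (k + 1) := by
  simp only [poissonWeight, Nat.factorial_succ, Nat.cast_mul, Nat.cast_succ]
  field_simp
  ring

lemma hasDerivAt_poissonWeight_succ (t : ℝ) (k : ℕ) :
    HasDerivAt (poissonWeight · (k + 1)) (poissonWeight t k - poissonWeight t (k + 1)) t := by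
  refine ((hasDerivAt_neg t).exp.mul ((hasDerivAt_pow (k + 1) t).div_const
    ((k + 1).factorial : ℝ))).congr_deriv ?_
  simp only [poissonWeight, Nat.factorial_succ, Nat.cast_mul, Nat.cast_succ, Nat.add_sub_cancel]
  field_simp
  ring

lemma Q_zero (t : ℝ) : Q t 0 = 1 := by simp [Q]

lemma Q_succ (t : ℝ) (k : ℕ) : Q t (k + 1) = Q t k - poissonWeight t k := by
  simp only [Q, poissonWeight, sum_range_succ]
  ring

lemma Q_eq_Q_succ_add_s16 (t : ℝ) (k : ℕ) : Q t k = Q t (k + 1) + poissonWeight t k := by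
  rw [Q_succ]
  ring

lemma hasDerivAt_Q_succ (t : ℝ) (k : ℕ) : HasDerivAt (Q · (k + 1)) (poissonWeight t k) t := by
  induction k with
  | zero =>
    simp only [Q_succ, Q_zero, poissonWeight, pow_zero, Nat.factorial_zero, Nat.cast_one,
      div_one, mul_one]
    simpa using ((hasDerivAt_neg t).exp.const_sub 1)
  | succ k ih =>
    simp only [Q_succ _ (k + 1)]
    exact (ih.sub (hasDerivAt_poissonWeight_succ t k)).congr_deriv (by ring)

lemma hasDerivAt_mul_Q (t : ℝ) (ℓ : ℕ) :
    HasDerivAt (fun x => x * Q x ℓ) (Q t (ℓ + 1) + (ℓ + 1) * poissonWeight t ℓ) t := by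
  have hsplit : (fun x => x * Q x ℓ)
      = fun x => x * Q x (ℓ + 1) + (ℓ + 1) * poissonWeight x (ℓ + 1) := by
    ext x
    rw [← mul_poissonWeight, Q_succ]
    ring
  rw [hsplit]
  refine (((hasDerivAt_id t).mul (hasDerivAt_Q_succ t ℓ)).add
    ((hasDerivAt_poissonWeight_succ t ℓ).const_mul ((ℓ : ℝ) + 1))).congr_deriv ?_
  rw [id, mul_poissonWeight]
  ring

noncomputable def tailTerm (ℓ : ℕ) (t : ℝ) (n : ℕ) : ℝ :=
  t ^ (n + 1) / (ℓ + 1).ascFactorial (n + 1)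

noncomputable def tailRatio (ℓ : ℕ) (t : ℝ) : ℝ := ∑' n, tailTerm ℓ t n

section TailRatio

variable {ℓ : ℕ} {t : ℝ}

lemma tailTerm_pos (ht : 0 < t) (n : ℕ) : 0 < tailTerm ℓ t n := by
  unfold tailTerm
  have := Nat.ascFactorial_pos ℓ (n + 1)
  positivity

lemma tailTerm_zero : tailTerm ℓ t 0 = t / (ℓ + 1) := by
  simp [tailTerm, Nat.ascFactorial]

lemma mul_tailTerm (n : ℕ) : t * tailTerm ℓ t n = (ℓ + n + 2) * tailTerm ℓ t (n + 1) := by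
  have := Nat.ascFactorial_pos ℓ (n + 1)
  simp only [tailTerm, Nat.ascFactorial_succ (n := ℓ + 1) (k := n + 1), Nat.cast_mul]
  push_cast
  field_simp
  ring

lemma tailTerm_lt_mul (ht : 0 < t) (i j : ℕ) :
    tailTerm ℓ t (i + j + 1) < tailTerm ℓ t i * tailTerm ℓ t j := by
  have hlt : (ℓ + 1).ascFactorial (i + 1) * (ℓ + 1).ascFactorial (j + 1)
      < (ℓ + 1).ascFactorial (i + j + 1 + 1) := by
    rw [show i + j + 1 + 1 = (i + 1) + (j + 1) by ring,
      ← Nat.ascFactorial_mul_ascFactorial (ℓ + 1) (i + 1) (j + 1)]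
    refine Nat.mul_lt_mul_of_pos_left ?_ (Nat.ascFactorial_pos _ _)
    rw [Nat.ascFactorial_succ, Nat.ascFactorial_succ]
    exact Nat.mul_lt_mul_of_lt_of_le (by omega) (Nat.ascFactorial_le _ (by omega))
      (Nat.ascFactorial_pos _ _)
  have hpos := Nat.ascFactorial_pos ℓ (i + 1)
  have hpos' := Nat.ascFactorial_pos ℓ (j + 1)
  simp only [tailTerm, div_mul_div_comm, ← pow_add]
  rw [show i + 1 + (j + 1) = i + j + 1 + 1 by ring]
  gcongr
  exact_mod_cast hlt

lemma poissonWeight_mul_tailTerm (n : ℕ) :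
    poissonWeight t ℓ * tailTerm ℓ t n
      = exp (-t) * (t ^ (n + (ℓ + 1)) / (n + (ℓ + 1)).factorial) := by
  have hfac : ((ℓ + (n + 1)).factorial : ℝ) = ℓ.factorial * (ℓ + 1).ascFactorial (n + 1) := by
    exact_mod_cast (Nat.factorial_mul_ascFactorial ℓ (n + 1)).symm
  have := Nat.ascFactorial_pos ℓ (n + 1)
  rw [show n + (ℓ + 1) = ℓ + (n + 1) by ring, hfac, poissonWeight, tailTerm]
  field_simp
  ring

lemma hasSum_poissonWeight_mul_tailTerm :
    HasSum (fun n => poissonWeight t ℓ * tailTerm ℓ t n) (Q t (ℓ + 1)) := by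
  have hexp := (hasSum_nat_add_iff' (ℓ + 1)).mpr (NormedSpace.expSeries_div_hasSum_exp t)
  have hQ : Q t (ℓ + 1) = exp (-t) * (exp t - ∑ i ∈ range (ℓ + 1), t ^ i / i.factorial) := by
    rw [Q, mul_sub, ← exp_add, neg_add_cancel, exp_zero]
  simp only [poissonWeight_mul_tailTerm, hQ, exp_eq_exp_ℝ]
  exact hexp.mul_left _

lemma summable_tailTerm (ht : 0 < t) : Summable (tailTerm ℓ t) := by
  have hp := (poissonWeight_pos ht ℓ).ne'
  simpa [← mul_assoc, inv_mul_cancel₀ hp] using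
    (hasSum_poissonWeight_mul_tailTerm (ℓ := ℓ) (t := t)).summable.mul_left (poissonWeight t ℓ)⁻¹

lemma Q_succ_eq_poissonWeight_mul_tailRatio (ht : 0 < t) :
    Q t (ℓ + 1) = poissonWeight t ℓ * tailRatio ℓ t :=
  ((summable_tailTerm ht).hasSum.mul_left _).unique hasSum_poissonWeight_mul_tailTerm |>.symm

lemma tailRatio_pos (ht : 0 < t) : 0 < tailRatio ℓ t :=
  (summable_tailTerm ht).tsum_pos (fun n => (tailTerm_pos ht n).le) 0 (tailTerm_pos ht 0)

lemma Q_succ_pos (ht : 0 < t) : 0 < Q t (ℓ + 1) := by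
  rw [Q_succ_eq_poissonWeight_mul_tailRatio ht]
  exact mul_pos (poissonWeight_pos ht ℓ) (tailRatio_pos ht)

lemma hasSum_tailTerm_convolution (ht : 0 < t) :
    HasSum (fun n => ∑ k ∈ range (n + 1), tailTerm ℓ t k * tailTerm ℓ t (n - k))
      (tailRatio ℓ t ^ 2) := by
  have hnorm : Summable fun n => ‖tailTerm ℓ t n‖ := by
    simpa only [Real.norm_of_nonneg (tailTerm_pos ht _).le] using summable_tailTerm ht
  rw [sq]
  exact hasSum_sum_range_mul_of_summable_norm hnorm hnorm

lemma succ_mul_tailTerm_lt_convolution (ht : 0 < t) (n : ℕ) :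
    (n + 1) * tailTerm ℓ t (n + 1)
      < ∑ k ∈ range (n + 1), tailTerm ℓ t k * tailTerm ℓ t (n - k) := by
  calc (n + 1) * tailTerm ℓ t (n + 1) = ∑ k ∈ range (n + 1), tailTerm ℓ t (n + 1) := by
        simp
    _ < _ := sum_lt_sum_of_nonempty nonempty_range_add_one fun k hk => by
        have := tailTerm_lt_mul (ℓ := ℓ) ht k (n - k)
        rwa [show k + (n - k) + 1 = n + 1 by grind] at this

lemma mul_tailRatio_add_lt (ht : 0 < t) :
    t * tailRatio ℓ t + t < tailRatio ℓ t ^ 2 + (ℓ + 1) * tailRatio ℓ t := by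
  set R := tailRatio ℓ t
  have hR : HasSum (tailTerm ℓ t) R := (summable_tailTerm ht).hasSum
  have hshift : HasSum (fun n => (ℓ + 1) * tailTerm ℓ t (n + 1)) ((ℓ + 1) * R - t) := by
    have := (hasSum_nat_add_iff' 1).mpr (hR.mul_left ((ℓ : ℝ) + 1))
    rwa [sum_range_one, tailTerm_zero, mul_div_cancel₀ _ (by positivity)] at this
  have hterm (n : ℕ) : t * tailTerm ℓ t n
      < ∑ k ∈ range (n + 1), tailTerm ℓ t k * tailTerm ℓ t (n - k)
        + (ℓ + 1) * tailTerm ℓ t (n + 1) := by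
    rw [mul_tailTerm]
    linarith [succ_mul_tailTerm_lt_convolution (ℓ := ℓ) ht n]
  have := hasSum_lt (fun n => (hterm n).le) (hterm 0) (hR.mul_left t)
    ((hasSum_tailTerm_convolution ht).add hshift)
  linarith

end TailRatio

noncomputable def truncatedPoissonMean (ℓ : ℕ) (t : ℝ) : ℝ := t * Q t ℓ / Q t (ℓ + 1)

section TruncatedPoissonMean

variable {ℓ : ℕ} {t : ℝ}

lemma truncatedPoissonMean_div_self (ht : 0 < t) :
    truncatedPoissonMean ℓ t / t = 1 + poissonWeight t ℓ / Q t (ℓ + 1) := by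
  have hq := (Q_succ_pos (ℓ := ℓ) ht).ne'
  rw [truncatedPoissonMean, Q_eq_Q_succ_add_s16 t ℓ]
  field_simp

lemma hasDerivAt_truncatedPoissonMean (ht : 0 < t) :
    HasDerivAt (truncatedPoissonMean ℓ)
      (poissonWeight t ℓ ^ 2 * (tailRatio ℓ t ^ 2 + (ℓ + 1) * tailRatio ℓ t
        - (t * tailRatio ℓ t + t)) / Q t (ℓ + 1) ^ 2) t := by
  refine ((hasDerivAt_mul_Q t ℓ).div (hasDerivAt_Q_succ t ℓ) (Q_succ_pos ht).ne').congr_deriv ?_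
  rw [Q_eq_Q_succ_add_s16 t ℓ, Q_succ_eq_poissonWeight_mul_tailRatio ht]
  ring

lemma deriv_truncatedPoissonMean_pos (ht : 0 < t) : 0 < deriv (truncatedPoissonMean ℓ) t := by
  rw [(hasDerivAt_truncatedPoissonMean ht).deriv]
  have := mul_tailRatio_add_lt (ℓ := ℓ) ht
  have := poissonWeight_pos ht ℓ
  have := Q_succ_pos (ℓ := ℓ) ht
  exact div_pos (mul_pos (by positivity) (by linarith)) (by positivity)

lemma continuousOn_truncatedPoissonMean : ContinuousOn (truncatedPoissonMean ℓ) (Ioi 0) :=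
  fun _ ht => (hasDerivAt_truncatedPoissonMean ht).continuousAt.continuousWithinAt

lemma strictMonoOn_truncatedPoissonMean : StrictMonoOn (truncatedPoissonMean ℓ) (Ioi 0) :=
  strictMonoOn_of_deriv_pos (convex_Ioi 0) continuousOn_truncatedPoissonMean
    fun _ ht => deriv_truncatedPoissonMean_pos (interior_subset ht)

end TruncatedPoissonMean

theorem StrictMonoOn.continuousAt_of_rightInvOn {α β : Type*} [LinearOrder α]
    [TopologicalSpace α] [OrderTopology α] [DenselyOrdered α] [LinearOrder β]
    [TopologicalSpace β] [OrderTopology β] {f : α → β} {g : β → α} {s : Set α} {U : Set β} {b : β}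
    (hf : StrictMonoOn f s) (hfc : ContinuousOn f s) (hs : IsOpen s) (hU : IsOpen U) (hb : b ∈ U)
    (hgU : MapsTo g U s) (hfg : RightInvOn g f U) : ContinuousAt g b := by
  have hmono : MonotoneOn g U := fun y hy y' hy' hyy' => by
    rwa [← hf.le_iff_le (hgU hy) (hgU hy'), hfg hy, hfg hy']
  have himage : g '' U = s ∩ f ⁻¹' U := by
    ext x
    constructor
    · rintro ⟨y, hy, rfl⟩
      exact ⟨hgU hy, by simpa [hfg hy] using hy⟩
    · rintro ⟨hx, hfx⟩
      exact ⟨f x, hfx, hf.injOn (hgU hfx) hx (hfg hfx)⟩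
  refine continuousAt_of_monotoneOn_of_image_mem_nhds hmono (hU.mem_nhds hb) ?_
  rw [himage]
  exact (hfc.isOpen_inter_preimage hs hU).mem_nhds ⟨hgU hb, by simpa [hfg hb] using hb⟩

theorem rate_function_derivative_general (ℓ : ℕ) (Λ : ℝ)
    (T : ℝ → ℝ)
    (hT : ∀ z : ℝ, (ℓ : ℝ) + 1 < z → 0 < T z ∧ z = T z * Q (T z) ℓ / Q (T z) (ℓ + 1)) :
    ∀ z : ℝ, (ℓ : ℝ) + 1 < z →
      HasDerivAt
        (fun z => z * (Real.log (T z) - Real.log Λ) - T z + Λ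
          - Real.log (Q (T z) (ℓ + 1)) + Real.log (Q Λ (ℓ + 1)))
        (Real.log (T z) - Real.log Λ) z := by
  intro z hz
  have hTpos : MapsTo T (Ioi ((ℓ : ℝ) + 1)) (Ioi 0) := fun y hy => (hT y hy).1
  have hmean : RightInvOn T (truncatedPoissonMean ℓ) (Ioi ((ℓ : ℝ) + 1)) :=
    fun y hy => (hT y hy).2.symm
  have hTz : 0 < T z := hTpos hz
  have hcont : ContinuousAt T z :=
    strictMonoOn_truncatedPoissonMean.continuousAt_of_rightInvOn
      continuousOn_truncatedPoissonMean isOpen_Ioi isOpen_Ioi hz hTpos hmean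
  have hT' : HasDerivAt T (deriv (truncatedPoissonMean ℓ) (T z))⁻¹ z :=
    (hasDerivAt_truncatedPoissonMean hTz).differentiableAt.hasDerivAt.of_local_left_inverse hcont
      (deriv_truncatedPoissonMean_pos hTz).ne' (eventually_of_mem (isOpen_Ioi.mem_nhds hz) hmean)
  set T' := (deriv (truncatedPoissonMean ℓ) (T z))⁻¹
  have hlogQ : HasDerivAt (fun y => log (Q (T y) (ℓ + 1)))
      (poissonWeight (T z) ℓ * T' / Q (T z) (ℓ + 1)) z :=
    ((hasDerivAt_Q_succ (T z) ℓ).comp z hT').log (Q_succ_pos hTz).ne'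
  have hI := ((((hasDerivAt_id z).mul ((hT'.log hTz.ne').sub_const (log Λ))).sub hT').add_const
    Λ).sub hlogQ |>.add_const (log (Q Λ (ℓ + 1)))
  refine hI.congr_deriv ?_
  have hcrit := truncatedPoissonMean_div_self (ℓ := ℓ) hTz
  rw [hmean hz] at hcrit
  simp only [id]
  linear_combination T' * hcrit

/-- If `T z` solves `z = T·Q(T,ℓ)/Q(T,ℓ+1)` for every `z > ℓ+1`, then the rate function
`I_Λ(z) = z(ln T_z − ln Λ) − T_z + Λ − ln Q(T_z,ℓ+1) + ln Q(Λ,ℓ+1)` has derivative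
`ln T_z − ln Λ` at every `z > ℓ+1`. -/
theorem rate_function_derivative (ℓ : ℕ) (hℓ : 1 ≤ ℓ) (Λ : ℝ) (hΛ : 0 < Λ)
    (T : ℝ → ℝ)
    (hT : ∀ z : ℝ, (ℓ : ℝ) + 1 < z → 0 < T z ∧ z = T z * Q (T z) ℓ / Q (T z) (ℓ + 1)) :
    ∀ z : ℝ, (ℓ : ℝ) + 1 < z →
      HasDerivAt
        (fun z => z * (Real.log (T z) - Real.log Λ) - T z + Λ
          - Real.log (Q (T z) (ℓ + 1)) + Real.log (Q Λ (ℓ + 1)))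
        (Real.log (T z) - Real.log Λ) z :=
  rate_function_derivative_general ℓ Λ T hT
end
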